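/- Let (X,d) be a compact metric space, T : X → X a continuous map, and ρ the Lévy–Prokhorov metric on M(X). Then the spanning numbers of T are bounded in n at every scale if and only if the spanning numbers of the pushforward map T_* are: (for every ε > 0 there exists C > 0 with Span(T, n, ε) ≤ C for all n) if and only if (for every ε > 0 there exists C > 0 with Span(T_*, n, ε) ≤ C for all n, computed with respect to ρ). (Equivalently, the generalized entropy o(T) equals the class ⟦0⟧ of constant sequences if and only if o(T_*) = ⟦0⟧.) -/

import Mathlib

/-!
If `Y` is `(n, η)`-spanning for `T`, send each point `x` measurably to a centre `y (q x) ∈ Y`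
with `d_n(x, y (q x)) < η`. For every measure `μ` this moves `T^i_* μ` by at most `η` in `ρ`
for all `i < n`, and lands on the image of a probability measure on `Fin |Y|`. By compactness,
probability measures on a finite set admit a finite net in the strong sense `p s ≤ p' s + η`
for every `s`, and that sense is preserved by every push-forward. So `Span(T_*, n, ε)` is
bounded by a number depending only on `Span(T, n, ε / 2)` and `ε`.

Conversely `x ↦ δ_x` semiconjugates `T` to `T_*`, and two Dirac masses that are `t`-close
(`t ≤ 1/2`) to a common measure have atoms `2t`-close, since both `t`-balls carry mass above
`1 - t`. Hence an `(n, t)`-spanning set for `T_*` yields an `(n, 2t)`-spanning set for `T` with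
no more points.
-/

open Metric Filter TopologicalSpace MeasureTheory Set

namespace Paper

variable {α : Type*}

/-- `A` is `(n,ε)`-separated for the iterates of `S`, w.r.t. the distance function `D`. -/
def IsSep (D : α → α → ℝ) (S : α → α) (n : ℕ) (ε : ℝ) (A : Set α) : Prop :=
  ∀ x ∈ A, ∀ y ∈ A, x ≠ y → ∃ i < n, ε ≤ D (S^[i] x) (S^[i] y)

/-- `Sep(S,n,ε)`: maximal cardinality of an `(n,ε)`-separated set. -/
noncomputable def sep (D : α → α → ℝ) (S : α → α) (n : ℕ) (ε : ℝ) : ℕ :=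
  sSup {k | ∃ A : Finset α, A.card = k ∧ IsSep D S n ε ↑A}

/-- `E` is `(n,ε)`-spanning for the iterates of `S`, w.r.t. the distance function `D`. -/
def IsSpan (D : α → α → ℝ) (S : α → α) (n : ℕ) (ε : ℝ) (E : Finset α) : Prop :=
  ∀ x : α, ∃ y ∈ E, ∀ i < n, D (S^[i] x) (S^[i] y) < ε

/-- `Span(S,n,ε)`: minimal cardinality of an `(n,ε)`-spanning set. -/
noncomputable def span (D : α → α → ℝ) (S : α → α) (n : ℕ) (ε : ℝ) : ℕ :=
  sInf {k | ∃ E : Finset α, E.card = k ∧ IsSpan D S n ε E}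

variable {X : Type*} [MetricSpace X]

/-- The induced hyperspace map `T_K` on nonempty compact (= closed, for `X` compact) subsets. -/
noncomputable def indK (T : X → X) (hT : Continuous T) :
    NonemptyCompacts X → NonemptyCompacts X :=
  fun W => ⟨⟨T '' ↑W, W.isCompact.image hT⟩, W.nonempty.image T⟩

variable [MeasurableSpace X] [BorelSpace X]

/-- The measure-induced (push-forward) map `T_*` on Borel probability measures. -/
noncomputable def push (T : X → X) (hT : Continuous T) :
    ProbabilityMeasure X → ProbabilityMeasure X :=
  fun μ => ⟨(μ : Measure X).map T, Measure.isProbabilityMeasure_map hT.measurable.aemeasurable⟩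

/-- The (one-sided) Lévy–Prokhorov metric
`ρ(μ,ν) = inf {δ > 0 | μ(A) ≤ ν(A_δ) + δ for all Borel A}`. -/
noncomputable def prokhorov (μ ν : ProbabilityMeasure X) : ℝ :=
  sInf {δ : ℝ | 0 < δ ∧ ∀ A : Set X, MeasurableSet A →
    (μ A : ℝ) ≤ (ν (Metric.thickening δ A) : ℝ) + δ}

end Paper

open scoped NNReal ENNReal

lemma exists_measurable_fin_index_mem {Ω : Type*} [MeasurableSpace Ω] {k : ℕ}
    {U : Fin k → Set Ω} (hU : ∀ j, MeasurableSet (U j)) (hcov : ∀ x, ∃ j, x ∈ U j) :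
    ∃ q : Ω → Fin k, Measurable q ∧ ∀ x, x ∈ U (q x) := by
  classical
  have hex : ∀ x, ∃ m, ∃ h : m < k, x ∈ U ⟨m, h⟩ := fun x =>
    let ⟨j, hj⟩ := hcov x; ⟨j, j.2, hj⟩
  refine ⟨fun x => ⟨Nat.find (hex x), (Nat.find_spec (hex x)).1⟩, ?_,
    fun x => (Nat.find_spec (hex x)).2⟩
  have hfind : Measurable fun x => Nat.find (hex x) := measurable_find hex fun m => by
    by_cases hm : m < k
    · simpa [hm] using hU ⟨m, hm⟩
    · simp [hm]
  refine measurable_to_countable' fun j => ?_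
  convert hfind (measurableSet_singleton (j : ℕ)) using 1
  ext y
  simp [Fin.ext_iff]

lemma MeasureTheory.ProbabilityMeasure.exists_finset_forall_apply_le_add {ι : Type*} [Finite ι]
    [TopologicalSpace ι] [DiscreteTopology ι] [MeasurableSpace ι] [BorelSpace ι]
    {δ : ℝ} (hδ : 0 < δ) :
    ∃ F : Finset (ProbabilityMeasure ι),
      ∀ p : ProbabilityMeasure ι, ∃ p' ∈ F, ∀ s, (p s : ℝ) ≤ p' s + δ := by
  have hcont : ∀ s : Set ι, Continuous fun p : ProbabilityMeasure ι => (p s : ℝ) := fun s =>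
    continuous_iff_continuousAt.2 fun p =>
      (NNReal.continuous_coe.tendsto _).comp
        (ProbabilityMeasure.tendsto_measure_of_isClopen_of_tendsto tendsto_id
          (isClopen_discrete s))
  have hopen : ∀ p' : ProbabilityMeasure ι,
      IsOpen {p : ProbabilityMeasure ι | ∀ s, (p s : ℝ) < p' s + δ} := fun p' => by
    rw [Set.ofPred_forall]
    exact isOpen_iInter_of_finite fun s => isOpen_lt (hcont s) continuous_const
  obtain ⟨F, hF⟩ := CompactSpace.elim_nhds_subcover _ fun p' =>
    (hopen p').mem_nhds fun s => lt_add_of_pos_right _ hδ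
  refine ⟨F, fun p => ?_⟩
  have hp : p ∈ ⋃ p' ∈ F, {p | ∀ s, (p s : ℝ) < p' s + δ} := hF ▸ trivial
  obtain ⟨p', hp'F, hpp'⟩ := Set.mem_iUnion₂.1 hp
  exact ⟨p', hp'F, fun s => (hpp' s).le⟩

namespace Paper

section Span

variable {α β : Type*} {D : α → α → ℝ} {S : α → α} {n : ℕ} {ε : ℝ}

lemma span_le_card {E : Finset α} (hE : IsSpan D S n ε E) : span D S n ε ≤ E.card :=
  Nat.sInf_le ⟨E, rfl, hE⟩

lemma exists_isSpan_card_eq_span (h : ∃ E, IsSpan D S n ε E) :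
    ∃ E : Finset α, E.card = span D S n ε ∧ IsSpan D S n ε E :=
  let ⟨E, hE⟩ := h
  Nat.sInf_mem (s := {k | ∃ E : Finset α, E.card = k ∧ IsSpan D S n ε E})
    ⟨E.card, E, rfl, hE⟩

/-- Each centre `b` is replaced by some `a` whose image orbit it `t`-shadows, if there is one. -/
lemma span_le_card_of_semiconj {D' : β → β → ℝ} {S' : β → β} {e : α → β}
    (he : Function.Semiconj e S S') {t : ℝ}
    (hclose : ∀ a a' b, D' (e a) b < t → D' (e a') b < t → D a a' < ε)
    {E : Finset β} (hE : IsSpan D' S' n t E) : span D S n ε ≤ E.card := by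
  classical
  set P : β → α → Prop := fun b a => ∀ i < n, D' (e (S^[i] a)) (S'^[i] b) < t
  let g : {b // ∃ a, P b a} → α := fun b => b.2.choose
  calc span D S n ε ≤ ((E.subtype fun b => ∃ a, P b a).image g).card := by
        refine span_le_card fun x => ?_
        obtain ⟨b, hbE, hxb⟩ := hE (e x)
        have hPx : P b x := fun i hi => by rw [(he.iterate_right i).eq]; exact hxb i hi
        refine ⟨g ⟨b, x, hPx⟩, Finset.mem_image_of_mem _ (Finset.mem_subtype.2 hbE),
          fun i hi => hclose _ _ _ (hPx i hi) ((⟨x, hPx⟩ : ∃ a, P b a).choose_spec i hi)⟩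
    _ ≤ (E.subtype fun b => ∃ a, P b a).card := Finset.card_image_le
    _ ≤ E.card := by
        rw [Finset.card_subtype]; exact Finset.card_filter_le _ _

end Span

section Bowen

variable {X : Type*} [MetricSpace X] {T : X → X}

def bowenBall (T : X → X) (n : ℕ) (x : X) (ε : ℝ) : Set X :=
  {y | ∀ i < n, dist (T^[i] y) (T^[i] x) < ε}

lemma isOpen_bowenBall (hT : Continuous T) (n : ℕ) (x : X) (ε : ℝ) :
    IsOpen (bowenBall T n x ε) := by
  have h : bowenBall T n x ε = ⋂ i ∈ Finset.range n, T^[i] ⁻¹' ball (T^[i] x) ε := by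
    ext y; simp [bowenBall]
  rw [h]
  exact isOpen_biInter_finset fun i _ => isOpen_ball.preimage (hT.iterate i)

lemma exists_isSpan_dist [CompactSpace X] (hT : Continuous T) (n : ℕ) {ε : ℝ} (hε : 0 < ε) :
    ∃ E : Finset X, IsSpan dist T n ε E := by
  obtain ⟨E, hE⟩ := CompactSpace.elim_nhds_subcover (fun x => bowenBall T n x ε) fun x =>
    (isOpen_bowenBall hT n x ε).mem_nhds fun i _ => by simpa using hε
  refine ⟨E, fun x => ?_⟩
  have hx : x ∈ ⋃ y ∈ E, bowenBall T n y ε := hE ▸ trivial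
  simpa only [Set.mem_iUnion₂, exists_prop, bowenBall, Set.mem_ofPred_eq] using hx

end Bowen

section Prokhorov

variable {X : Type*} [MetricSpace X] [MeasurableSpace X]

lemma prokhorov_le {μ ν : ProbabilityMeasure X} {δ : ℝ} (hδ : 0 < δ)
    (h : ∀ A, MeasurableSet A → (μ A : ℝ) ≤ ν (thickening δ A) + δ) :
    prokhorov μ ν ≤ δ :=
  csInf_le ⟨0, fun _ hδ' => hδ'.1.le⟩ ⟨hδ, h⟩

lemma exists_lt_forall_le_of_prokhorov_lt {μ ν : ProbabilityMeasure X} {t : ℝ}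
    (h : prokhorov μ ν < t) :
    ∃ δ < t, ∀ A, MeasurableSet A → (μ A : ℝ) ≤ ν (thickening δ A) + δ := by
  have hone : (1 : ℝ) ∈ {δ : ℝ | 0 < δ ∧ ∀ A : Set X, MeasurableSet A →
      (μ A : ℝ) ≤ (ν (thickening δ A) : ℝ) + δ} :=
    ⟨one_pos, fun A _ => le_add_of_nonneg_of_le (ν _).coe_nonneg (μ.apply_le_one A)⟩
  obtain ⟨δ, ⟨-, hδ⟩, hδt⟩ := exists_lt_of_csInf_lt ⟨1, hone⟩ h
  exact ⟨δ, hδt, hδ⟩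

variable [BorelSpace X] (T : X → X) (hT : Continuous T)

lemma push_iterate (i : ℕ) (μ : ProbabilityMeasure X) :
    (push T hT)^[i] μ = μ.map (hT.iterate i).measurable.aemeasurable := by
  induction i with
  | zero => ext1; simp
  | succ i ih =>
    rw [Function.iterate_succ_apply', ih]
    apply Subtype.ext
    change Measure.map T (Measure.map T^[i] μ) = Measure.map T^[i + 1] μ
    rw [Measure.map_map hT.measurable (hT.iterate i).measurable, Function.iterate_succ']

lemma push_iterate_apply (i : ℕ) (μ : ProbabilityMeasure X) {A : Set X} (hA : MeasurableSet A) :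
    (push T hT)^[i] μ A = μ (T^[i] ⁻¹' A) := by
  rw [push_iterate, ProbabilityMeasure.map_apply _ _ hA]

lemma push_diracProba (x : X) : push T hT (diracProba x) = diracProba (T x) :=
  Subtype.ext (Measure.map_dirac' hT.measurable x)

variable {T}

lemma one_sub_lt_apply_ball_of_prokhorov_diracProba_lt {z : X} {m : ProbabilityMeasure X} {t : ℝ}
    (h : prokhorov (diracProba z) m < t) : 1 - t < m (ball z t) := by
  obtain ⟨δ, hδt, hδ⟩ := exists_lt_forall_le_of_prokhorov_lt h
  have hz : (1 : ℝ) ≤ m (ball z δ) + δ := by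
    simpa [diracProba] using hδ {z} (measurableSet_singleton z)
  have hball : (m (ball z δ) : ℝ) ≤ m (ball z t) := by
    exact_mod_cast m.apply_mono (ball_subset_ball hδt.le)
  linarith

lemma dist_lt_of_prokhorov_diracProba_lt {z z' : X} {m : ProbabilityMeasure X} {t : ℝ}
    (ht : t ≤ 1 / 2) (hz : prokhorov (diracProba z) m < t)
    (hz' : prokhorov (diracProba z') m < t) :
    dist z z' < 2 * t := by
  have hmeet : (ball z t ∩ ball z' t).Nonempty := by
    rw [← Set.not_disjoint_iff_nonempty_inter]
    intro hdisj
    have hsum : (m (ball z t) : ℝ≥0∞) + m (ball z' t) ≤ 1 := by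
      simp only [ProbabilityMeasure.ennreal_coeFn_eq_coeFn_toMeasure]
      rw [← measure_union hdisj measurableSet_ball]
      exact prob_le_one
    have hsum' : (m (ball z t) : ℝ) + m (ball z' t) ≤ 1 := by exact_mod_cast hsum
    linarith [one_sub_lt_apply_ball_of_prokhorov_diracProba_lt hz,
      one_sub_lt_apply_ball_of_prokhorov_diracProba_lt hz']
  obtain ⟨w, hwz, hwz'⟩ := hmeet
  calc dist z z' ≤ dist w z + dist w z' := dist_triangle_left z z' w
    _ < t + t := add_lt_add hwz hwz'
    _ = 2 * t := (two_mul t).symm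

end Prokhorov

section Pushforward

variable {X : Type*} [MetricSpace X] [MeasurableSpace X] [BorelSpace X] {T : X → X}

lemma exists_isSpan_push_card_le (hT : Continuous T) {n : ℕ} {η ε : ℝ} (hη : 0 < η)
    (hηε : η < ε) {Y : Finset X} (hY : IsSpan dist T n η Y)
    {F : Finset (ProbabilityMeasure (Fin Y.card))}
    (hF : ∀ p : ProbabilityMeasure (Fin Y.card), ∃ p' ∈ F, ∀ s, (p s : ℝ) ≤ p' s + η) :
    ∃ E : Finset (ProbabilityMeasure X), E.card ≤ F.card ∧
      IsSpan prokhorov (push T hT) n ε E := by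
  classical
  set y : Fin Y.card → X := fun j => Y.equivFin.symm j
  have hy : ∀ x, ∃ j, x ∈ bowenBall T n (y j) η := fun x =>
    let ⟨z, hzY, hz⟩ := hY x
    ⟨Y.equivFin ⟨z, hzY⟩, by simpa [y, bowenBall] using hz⟩
  have hym : Measurable y := measurable_of_finite y
  refine ⟨F.image fun p => p.map hym.aemeasurable, Finset.card_image_le, fun μ => ?_⟩
  obtain ⟨q, hq, hqy⟩ := exists_measurable_fin_index_mem
    (fun j => (isOpen_bowenBall hT n (y j) η).measurableSet) hy
  obtain ⟨p', hp'F, hp'⟩ := hF (μ.map hq.aemeasurable)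
  refine ⟨p'.map hym.aemeasurable, Finset.mem_image_of_mem _ hp'F,
    fun i hi => (prokhorov_le hη fun A hA => ?_).trans_lt hηε⟩
  have hthick : MeasurableSet (thickening η A) := isOpen_thickening.measurableSet
  have hsub : T^[i] ⁻¹' A ⊆ q ⁻¹' ((T^[i] ∘ y) ⁻¹' thickening η A) := fun x hx =>
    mem_thickening_iff.2 ⟨T^[i] x, hx, by rw [dist_comm]; exact hqy x i hi⟩
  calc ((push T hT)^[i] μ A : ℝ) = μ (T^[i] ⁻¹' A) := by rw [push_iterate_apply T hT i μ hA]
    _ ≤ μ.map hq.aemeasurable ((T^[i] ∘ y) ⁻¹' thickening η A) := by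
        rw [ProbabilityMeasure.map_apply _ _ (MeasurableSet.of_discrete)]
        exact_mod_cast μ.apply_mono hsub
    _ ≤ p' ((T^[i] ∘ y) ⁻¹' thickening η A) + η := hp' _
    _ = (push T hT)^[i] (p'.map hym.aemeasurable) (thickening η A) + η := by
        rw [push_iterate_apply T hT i _ hthick,
          ProbabilityMeasure.map_apply _ _ ((hT.iterate i).measurable hthick)]
        rfl

end Pushforward

/-- `o(S) = ⟦0⟧` in the notation of generalized entropy. -/
def SpanBounded {α : Type*} (D : α → α → ℝ) (S : α → α) : Prop :=
  ∀ ε > (0 : ℝ), ∃ C > (0 : ℝ), ∀ n : ℕ, (span D S n ε : ℝ) ≤ C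

variable {X : Type*} [MetricSpace X] [CompactSpace X] [MeasurableSpace X] [BorelSpace X]
  {T : X → X}

lemma exists_isSpan_push (hT : Continuous T) (n : ℕ) {ε : ℝ} (hε : 0 < ε) :
    ∃ E : Finset (ProbabilityMeasure X), IsSpan prokhorov (push T hT) n ε E := by
  obtain ⟨Y, hY⟩ := exists_isSpan_dist hT n (half_pos hε)
  obtain ⟨F, hF⟩ :=
    ProbabilityMeasure.exists_finset_forall_apply_le_add (ι := Fin Y.card) (half_pos hε)
  obtain ⟨E, -, hE⟩ := exists_isSpan_push_card_le hT (half_pos hε) (half_lt_self hε) hY hF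
  exact ⟨E, hE⟩

lemma span_dist_le_span_push (hT : Continuous T) {t ε : ℝ} (ht : 0 < t) (ht_half : t ≤ 1 / 2)
    (htε : 2 * t ≤ ε) (n : ℕ) : span dist T n ε ≤ span prokhorov (push T hT) n t := by
  obtain ⟨E, hEcard, hE⟩ := exists_isSpan_card_eq_span (exists_isSpan_push hT n ht)
  rw [← hEcard]
  exact span_le_card_of_semiconj (fun x => (push_diracProba T hT x).symm)
    (fun _ _ _ ha ha' => (dist_lt_of_prokhorov_diracProba_lt ht_half ha ha').trans_le htε) hE

lemma SpanBounded.pushforward (hT : Continuous T) (h : SpanBounded dist T) :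
    SpanBounded prokhorov (push T hT) := by
  intro ε hε
  obtain ⟨C, -, hC⟩ := h (ε / 2) (half_pos hε)
  choose F hF using fun k =>
    ProbabilityMeasure.exists_finset_forall_apply_le_add (ι := Fin k) (half_pos hε)
  -- Minimal base spanning sets have at most `⌊C⌋₊` points, so finitely many nets suffice.
  let bound : ℕ := ∑ k ∈ Finset.range (⌊C⌋₊ + 1), (F k).card
  refine ⟨bound + 1, by positivity, fun n => ?_⟩
  obtain ⟨Y, hYcard, hY⟩ := exists_isSpan_card_eq_span (exists_isSpan_dist hT n (half_pos hε))
  obtain ⟨E, hEF, hE⟩ :=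
    exists_isSpan_push_card_le hT (half_pos hε) (half_lt_self hε) hY (hF Y.card)
  have hYC : Y.card ∈ Finset.range (⌊C⌋₊ + 1) :=
    Finset.mem_range_succ_iff.2 (Nat.le_floor (hYcard ▸ hC n))
  have hspan : span prokhorov (push T hT) n ε ≤ bound :=
    calc span prokhorov (push T hT) n ε ≤ E.card := span_le_card hE
      _ ≤ (F Y.card).card := hEF
      _ ≤ _ := Finset.single_le_sum (f := fun k => (F k).card) (fun _ _ => Nat.zero_le _) hYC
  exact (Nat.cast_le.2 hspan).trans (le_add_of_nonneg_right zero_le_one)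

lemma SpanBounded.of_pushforward (hT : Continuous T) (h : SpanBounded prokhorov (push T hT)) :
    SpanBounded dist T := by
  intro ε hε
  obtain ⟨C, hC0, hC⟩ := h (min (ε / 2) (1 / 2)) (lt_min (half_pos hε) one_half_pos)
  have htε : 2 * min (ε / 2) (1 / 2) ≤ ε := by linarith [min_le_left (ε / 2) (1 / 2)]
  refine ⟨C, hC0, fun n => (Nat.cast_le.2 ?_).trans (hC n)⟩
  exact span_dist_le_span_push hT (lt_min (half_pos hε) one_half_pos) (min_le_right _ _) htε n

end Paper

open Paper in
/-- The spanning numbers of `T` are bounded in `n` at every scale iff those of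
the push-forward map `T_*` (w.r.t. the Lévy–Prokhorov metric) are; equivalently
`o(T) = ⟦0⟧ ↔ o(T_*) = ⟦0⟧`. -/
theorem base_bounded_iff_pushforward_bounded
    {X : Type*} [MetricSpace X] [CompactSpace X] [MeasurableSpace X] [BorelSpace X]
    (T : X → X) (hT : Continuous T) :
    (∀ ε > (0 : ℝ), ∃ C > (0 : ℝ), ∀ n : ℕ, (span dist T n ε : ℝ) ≤ C) ↔
    (∀ ε > (0 : ℝ), ∃ C > (0 : ℝ), ∀ n : ℕ, (span prokhorov (push T hT) n ε : ℝ) ≤ C) :=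
  ⟨SpanBounded.pushforward hT, SpanBounded.of_pushforward hT⟩
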